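/- Let γ(x,ξ) = (|ξ|² − (∇η(x)·ξ)²/(1+|∇η(x)|²))^{3/4}. There exists a constant c₀ > 0, depending only on d and an upper bound for ‖∇η‖_{L^∞}, such that |det Hess_ξ γ(x,ξ)| ≥ c₀ for all x ∈ ℝ^d and all ξ with 1/4 ≤ |ξ| ≤ 4. -/

import Mathlib

/-!
Write `p = ∇η(x)` and `A = I - p pᵀ / (1 + |p|²)`, so that `γ(x, ·) = Q ^ (3/4)` with
`Q ξ = ⟪A ξ, ξ⟫`. For any exponent `r` the Hessian of `Q ^ r` at `ξ` is
`2r Q^(r-1) (I - 2(1-r)/Q · (Aξ) ξᵀ) A`, so by the matrix determinant lemma its determinant is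
`(2r - 1) (2r Q^(r-1))^d det A`, and `det A = 1 / (1 + |p|²)`. On the annulus
`0 < Q ≤ |ξ|² ≤ 16`, which bounds `Q^(-1/4)` from below, while `1 + |p|² ≤ 1 + K²`.
-/

open RealInnerProductSpace

noncomputable section

abbrev E (d : ℕ) := EuclideanSpace ℝ (Fin d)

open Matrix

theorem Matrix.det_one_sub_smul_vecMulVec {n R : Type*} [Fintype n] [DecidableEq n] [CommRing R]
    (c : R) (u v : n → R) : det (1 - c • vecMulVec u v) = 1 - c * (v ⬝ᵥ u) := by
  rw [sub_eq_add_neg, ← neg_smul, ← smul_vecMulVec, vecMulVec_eq Unit,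
    det_one_add_replicateCol_mul_replicateRow, dotProduct_smul, smul_eq_mul]
  ring

theorem EuclideanSpace.sum_smul_single {ι : Type*} [Fintype ι] [DecidableEq ι]
    (ξ : EuclideanSpace ℝ ι) : ∑ i, ξ i • EuclideanSpace.single i (1 : ℝ) = ξ := by
  simpa using (EuclideanSpace.basisFun ι ℝ).sum_repr ξ

section Calculus

variable {F : Type*} [NormedAddCommGroup F] [NormedSpace ℝ F] {B : F →L[ℝ] F →L[ℝ] ℝ}

theorem hasFDerivAt_apply_self (hB : ∀ u v, B u v = B v u) (ζ : F) :
    HasFDerivAt (fun ζ => B ζ ζ) (2 • B ζ) ζ :=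
  (B.hasFDerivAt_of_bilinear (hasFDerivAt_id ζ) (hasFDerivAt_id ζ)).congr_fderiv <| by
    ext w
    simp [two_smul, hB w ζ]

theorem iteratedFDeriv_two_rpow_apply_self (hB : ∀ u v, B u v = B v u) (r : ℝ) {ξ : F}
    (hξ : 0 < B ξ ξ) (u v : F) :
    iteratedFDeriv ℝ 2 (fun ζ => B ζ ζ ^ r) ξ ![u, v] =
      2 * r * B ξ ξ ^ (r - 1) * B u v + 4 * r * (r - 1) * B ξ ξ ^ (r - 2) * (B ξ u * B ξ v) := by
  set G : F → F →L[ℝ] ℝ := fun ζ => (r * B ζ ζ ^ (r - 1)) • (2 • B ζ)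
  have hfderiv : ∀ ζ, 0 < B ζ ζ → HasFDerivAt (fun ζ => B ζ ζ ^ r) (G ζ) ζ := fun ζ hζ =>
    (hasFDerivAt_apply_self hB ζ).rpow_const (Or.inl hζ.ne')
  have hpos : {ζ | 0 < B ζ ζ} ∈ nhds ξ :=
    (isOpen_lt continuous_const (by fun_prop)).mem_nhds hξ
  have hG : HasFDerivAt G _ ξ :=
    (((hasFDerivAt_apply_self hB ξ).rpow_const (p := r - 1) (Or.inl hξ.ne')).const_mul r).smul
      (2 • B).hasFDerivAt
  rw [iteratedFDeriv_two_apply, (Filter.eventuallyEq_of_mem hpos fun ζ hζ =>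
    (hfderiv ζ hζ).fderiv).fderiv_eq, hG.fderiv]
  simp only [Fin.isValue, cons_val_zero, cons_val_one, cons_val_fin_one, _root_.add_apply,
    _root_.smul_apply, ContinuousLinearMap.smulRight_apply, nsmul_eq_mul, Nat.cast_ofNat,
    smul_eq_mul]
  rw [sub_sub, one_add_one_eq_two]
  ring

end Calculus

section Coordinates

variable {ι : Type*} [DecidableEq ι] (B : EuclideanSpace ℝ ι →L[ℝ] EuclideanSpace ℝ ι →L[ℝ] ℝ)

def coordMatrix : Matrix ι ι ℝ :=
  of fun i j => B (EuclideanSpace.single i 1) (EuclideanSpace.single j 1)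

theorem coordMatrix_apply (i j : ι) :
    coordMatrix B i j = B (EuclideanSpace.single i 1) (EuclideanSpace.single j 1) :=
  rfl

variable [Fintype ι]

theorem apply_single_eq_vecMul_coordMatrix (ξ : EuclideanSpace ℝ ι) (j : ι) :
    B ξ (EuclideanSpace.single j 1) = (ξ.ofLp ᵥ* coordMatrix B) j := by
  conv_lhs => rw [← EuclideanSpace.sum_smul_single ξ]
  simp [vecMul, dotProduct, coordMatrix]

theorem apply_self_eq_dotProduct_vecMul_coordMatrix (ξ : EuclideanSpace ℝ ι) :
    B ξ ξ = ξ.ofLp ⬝ᵥ (ξ.ofLp ᵥ* coordMatrix B) :=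
  calc B ξ ξ = B ξ (∑ j, ξ j • EuclideanSpace.single j 1) := by
        rw [EuclideanSpace.sum_smul_single]
    _ = _ := by simp [dotProduct, apply_single_eq_vecMul_coordMatrix]

variable {B}

theorem det_hessian_rpow_apply_self (hB : ∀ u v, B u v = B v u) (r : ℝ)
    {ξ : EuclideanSpace ℝ ι} (hξ : 0 < B ξ ξ) :
    det (of fun i j => iteratedFDeriv ℝ 2 (fun ζ => B ζ ζ ^ r) ξ
        ![EuclideanSpace.single i 1, EuclideanSpace.single j 1]) =
      (2 * r - 1) * (2 * r * B ξ ξ ^ (r - 1)) ^ Fintype.card ι * det (coordMatrix B) := by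
  have hmat : (of fun i j => iteratedFDeriv ℝ 2 (fun ζ => B ζ ζ ^ r) ξ
        ![EuclideanSpace.single i 1, EuclideanSpace.single j 1]) =
      (2 * r * B ξ ξ ^ (r - 1)) • ((1 - (2 * (1 - r) / B ξ ξ) •
        vecMulVec (ξ.ofLp ᵥ* coordMatrix B) ξ.ofLp) * coordMatrix B) := by
    ext i j
    rw [sub_mul, one_mul, smul_mul, vecMulVec_mul]
    simp only [of_apply, iteratedFDeriv_two_rpow_apply_self hB r hξ,
      apply_single_eq_vecMul_coordMatrix B ξ, Matrix.smul_apply, Matrix.sub_apply,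
      vecMulVec_apply, smul_eq_mul, coordMatrix_apply]
    rw [show r - 2 = r - 1 - 1 by ring, Real.rpow_sub_one hξ.ne' (r - 1)]
    field_simp
    ring
  rw [hmat, det_smul, det_mul, det_one_sub_smul_vecMulVec,
    ← apply_self_eq_dotProduct_vecMul_coordMatrix]
  field_simp
  ring

end Coordinates

section GraphCometric

variable {F : Type*} [NormedAddCommGroup F] [InnerProductSpace ℝ F]

/-- The inverse `I - p pᵀ / (1 + |p|²)` of the metric `I + p pᵀ` induced on the graph of a
function with gradient `p`. Over `ℝ` the conjugate-linear `innerSL ℝ` is linear by unfolding. -/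
def graphCometric (p : F) : F →L[ℝ] F →L[ℝ] ℝ :=
  (show F →L[ℝ] F →L[ℝ] ℝ from innerSL ℝ) - (1 + ‖p‖ ^ 2)⁻¹ • (innerSL ℝ p).smulRight (innerSL ℝ p)

theorem graphCometric_apply (p u v : F) :
    graphCometric p u v = ⟪u, v⟫ - ⟪p, u⟫ * ⟪p, v⟫ / (1 + ‖p‖ ^ 2) := by
  simp only [graphCometric, _root_.sub_apply, _root_.smul_apply,
    ContinuousLinearMap.smulRight_apply, coe_innerSL_apply, smul_eq_mul, div_eq_inv_mul,
    sub_left_inj]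
  rfl

theorem graphCometric_comm (p u v : F) : graphCometric p u v = graphCometric p v u := by
  simp only [graphCometric_apply, real_inner_comm u v, mul_comm ⟪p, u⟫]

theorem graphCometric_apply_self (p ξ : F) :
    graphCometric p ξ ξ = ‖ξ‖ ^ 2 - ⟪p, ξ⟫ ^ 2 / (1 + ‖p‖ ^ 2) := by
  rw [graphCometric_apply, real_inner_self_eq_norm_sq, sq ⟪p, ξ⟫]

theorem graphCometric_apply_self_le (p ξ : F) : graphCometric p ξ ξ ≤ ‖ξ‖ ^ 2 := by
  rw [graphCometric_apply_self]
  have : 0 ≤ ⟪p, ξ⟫ ^ 2 / (1 + ‖p‖ ^ 2) := by positivity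
  linarith

theorem norm_sq_div_le_graphCometric_apply_self (p ξ : F) :
    ‖ξ‖ ^ 2 / (1 + ‖p‖ ^ 2) ≤ graphCometric p ξ ξ := by
  have hCS : ⟪p, ξ⟫ ^ 2 ≤ ‖p‖ ^ 2 * ‖ξ‖ ^ 2 := by
    rw [← mul_pow]
    exact sq_le_sq' (neg_le_of_abs_le (abs_real_inner_le_norm p ξ)) (real_inner_le_norm p ξ)
  rw [graphCometric_apply_self, le_sub_iff_add_le, ← add_div, div_le_iff₀ (by positivity)]
  nlinarith

theorem graphCometric_apply_self_pos (p : F) {ξ : F} (hξ : ξ ≠ 0) : 0 < graphCometric p ξ ξ :=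
  (by positivity : 0 < ‖ξ‖ ^ 2 / (1 + ‖p‖ ^ 2)).trans_le
    (norm_sq_div_le_graphCometric_apply_self p ξ)

variable {ι : Type*} [Fintype ι] [DecidableEq ι]

theorem coordMatrix_graphCometric (p : EuclideanSpace ℝ ι) :
    coordMatrix (graphCometric p) = 1 - (1 + ‖p‖ ^ 2)⁻¹ • vecMulVec p.ofLp p.ofLp := by
  ext i j
  simp [coordMatrix, graphCometric_apply, one_apply, vecMulVec_apply, eq_comm,
    EuclideanSpace.inner_single_right, div_eq_inv_mul]

theorem det_coordMatrix_graphCometric (p : EuclideanSpace ℝ ι) :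
    det (coordMatrix (graphCometric p)) = (1 + ‖p‖ ^ 2)⁻¹ := by
  have hp : p.ofLp ⬝ᵥ p.ofLp = ‖p‖ ^ 2 := by
    rw [← real_inner_self_eq_norm_sq, PiLp.inner_apply]
    simp [dotProduct, sq]
  rw [coordMatrix_graphCometric, det_one_sub_smul_vecMulVec, hp]
  field_simp
  ring

theorem det_hessian_graphCometric_rpow (p : EuclideanSpace ℝ ι) (r : ℝ)
    {ξ : EuclideanSpace ℝ ι} (hξ : ξ ≠ 0) :
    det (of fun i j => iteratedFDeriv ℝ 2 (fun ζ => graphCometric p ζ ζ ^ r) ξ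
        ![EuclideanSpace.single i 1, EuclideanSpace.single j 1]) =
      (2 * r - 1) * (2 * r * graphCometric p ξ ξ ^ (r - 1)) ^ Fintype.card ι /
        (1 + ‖p‖ ^ 2) := by
  rw [det_hessian_rpow_apply_self (graphCometric_comm p) r (graphCometric_apply_self_pos p hξ),
    det_coordMatrix_graphCometric, div_eq_mul_inv]

end GraphCometric

theorem stmt1_general (d : ℕ) (K : ℝ) :
    ∃ c₀ > (0 : ℝ), ∀ (η : E d → ℝ), ContDiff ℝ 2 η →
      (∀ x, ‖gradient η x‖ ≤ K) →
      ∀ (γ : E d → E d → ℝ),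
      (∀ x ξ, γ x ξ =
        (‖ξ‖ ^ 2 - (inner ℝ (gradient η x) ξ : ℝ) ^ 2 / (1 + ‖gradient η x‖ ^ 2)) ^ (3 / 4 : ℝ)) →
      ∀ x ξ, 1 / 4 ≤ ‖ξ‖ → ‖ξ‖ ≤ 4 →
        c₀ ≤ |Matrix.det (Matrix.of fun i j : Fin d =>
          iteratedFDeriv ℝ 2 (fun ζ => γ x ζ) ξ
            ![EuclideanSpace.single i 1, EuclideanSpace.single j 1])| := by
  refine ⟨(2 * (3 / 4) - 1) * (3 / 4) ^ d / (1 + K ^ 2), by positivity, ?_⟩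
  intro η _ hK γ hγ x ξ hξ₁ hξ₂
  set p := gradient η x
  set Q := graphCometric p ξ ξ
  have hξ : ξ ≠ 0 := norm_pos_iff.mp ((by norm_num : (0 : ℝ) < 1 / 4).trans_le hξ₁)
  have hγp : (fun ζ => γ x ζ) = fun ζ => graphCometric p ζ ζ ^ (3 / 4 : ℝ) :=
    funext fun ζ => by rw [hγ, graphCometric_apply_self]
  have hQ : 0 < Q := graphCometric_apply_self_pos p hξ
  have hQ_le : Q ≤ 16 := (graphCometric_apply_self_le p ξ).trans (by nlinarith)
  have hrpow : 3 / 4 ≤ 2 * (3 / 4) * Q ^ (3 / 4 - 1 : ℝ) :=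
    calc (3 / 4 : ℝ) = 2 * (3 / 4) * 16 ^ (3 / 4 - 1 : ℝ) := by
          rw [show (16 : ℝ) = 2 ^ (4 : ℝ) by norm_num, ← Real.rpow_mul (by norm_num)]
          norm_num
      _ ≤ 2 * (3 / 4) * Q ^ (3 / 4 - 1 : ℝ) :=
          mul_le_mul_of_nonneg_left (Real.rpow_le_rpow_of_nonpos hQ hQ_le (by norm_num))
            (by norm_num)
  have hp : 1 + ‖p‖ ^ 2 ≤ 1 + K ^ 2 := by nlinarith [hK x, norm_nonneg p]
  rw [hγp, det_hessian_graphCometric_rpow p _ hξ, Fintype.card_fin]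
  refine le_trans ?_ (le_abs_self _)
  gcongr

/-- Non-degeneracy of the Hessian in `ξ` of the symbol
`γ(x,ξ) = (|ξ|² − (∇η(x)·ξ)²/(1+|∇η(x)|²))^{3/4}` on the annulus `1/4 ≤ |ξ| ≤ 4`:
there is `c₀ > 0`, depending only on `d` and an upper bound `K` for `‖∇η‖_{L^∞}`, with
`|det Hess_ξ γ| ≥ c₀`. -/
theorem stmt1 (d : ℕ) (hd : 1 ≤ d) (K : ℝ) :
    ∃ c₀ > (0 : ℝ), ∀ (η : E d → ℝ), ContDiff ℝ 2 η →
      (∀ x, ‖gradient η x‖ ≤ K) →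
      ∀ (γ : E d → E d → ℝ),
      (∀ x ξ, γ x ξ =
        (‖ξ‖ ^ 2 - (inner ℝ (gradient η x) ξ : ℝ) ^ 2 / (1 + ‖gradient η x‖ ^ 2)) ^ (3 / 4 : ℝ)) →
      ∀ x ξ, 1 / 4 ≤ ‖ξ‖ → ‖ξ‖ ≤ 4 →
        c₀ ≤ |Matrix.det (Matrix.of fun i j : Fin d =>
          iteratedFDeriv ℝ 2 (fun ζ => γ x ζ) ξ
            ![EuclideanSpace.single i 1, EuclideanSpace.single j 1])| :=
  stmt1_general d K
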